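/- arXiv:2505.00778 — 2 statements merged into one kernel-verified Lean document; each statement's English description precedes it below -/
import Mathlib

section
/- Let b > 2 be an integer such that b ≡ 𝔟 (mod 641) for some 𝔟 ∈ {1, 147, 265, 378} and b ≢ 1 (mod 5). Then there exist infinitely many positive integers t such that the b-repunit (b^t − 1)/(b − 1) is a Sierpiński number. -/
set_option exponentiation.threshold 2000
set_option maxRecDepth 4000


/-- A number is composite if it is a product of two integers greater than 1. -/
def IsComposite (n : ℕ) : Prop := ∃ a b : ℕ, 1 < a ∧ 1 < b ∧ n = a * b

/-- A Sierpiński number is an odd positive integer `k` such that `k·2^n + 1` is composite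
for every positive integer `n`. -/
def IsSierpinski (k : ℕ) : Prop := 0 < k ∧ Odd k ∧ ∀ n : ℕ, 0 < n → IsComposite (k * 2 ^ n + 1)

/- ### Auxiliary machinery -/

/-- The base-`b` repunit with `t` digits, as a geometric sum. -/
def repS (b t : ℕ) : ℕ := ∑ i ∈ Finset.range t, b ^ i

lemma repS_succ (b t : ℕ) : repS b (t + 1) = b * repS b t + 1 := by
  unfold repS
  rw [Finset.sum_range_succ']
  simp [pow_succ, Finset.mul_sum, mul_comm, add_comm]

lemma pow_eq_repS (b t : ℕ) (hb : 2 ≤ b) : b ^ t = (b - 1) * repS b t + 1 := by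
  obtain ⟨c, rfl⟩ : ∃ c, b = c + 2 := ⟨b - 2, by omega⟩
  induction t with
  | zero => simp [repS]
  | succ n ih =>
    rw [repS_succ, pow_succ, ih]
    have h1 : c + 2 - 1 = c + 1 := by omega
    rw [h1]
    ring

lemma repunit_eq_repS (b t : ℕ) (hb : 2 ≤ b) : (b ^ t - 1) / (b - 1) = repS b t := by
  have h := pow_eq_repS b t hb
  have h2 : b ^ t - 1 = (b - 1) * repS b t := by omega
  rw [h2, Nat.mul_div_cancel_left _ (by omega)]

lemma pow_eq_pow_of_modEq' {G : Type*} [Monoid G] {x : G} {d : ℕ} (hx : x ^ d = 1)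
    {n a : ℕ} (h : n ≡ a [MOD d]) : x ^ n = x ^ a := by
  have key : ∀ m : ℕ, x ^ m = x ^ (m % d) := by
    intro m
    conv_lhs => rw [← Nat.div_add_mod m d]
    rw [pow_add, pow_mul, hx, one_pow, one_mul]
  rw [key n, key a, h]

lemma isComposite_of_dvd {p N : ℕ} (hp : 1 < p) (hlt : p < N) (hdvd : p ∣ N) :
    IsComposite N := by
  refine ⟨p, N / p, hp, ?_, (Nat.mul_div_cancel' hdvd).symm⟩
  have h := Nat.mul_div_cancel' hdvd
  by_contra hle
  push_neg at hle
  interval_cases h' : (N / p)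
  · omega
  · omega

lemma dvd_cover (p : ℕ) (k n c a d : ℕ) [NeZero p]
    (hk : k ≡ c [MOD p]) (hn : n ≡ a [MOD d])
    (h2d : (2 : ZMod p) ^ d = 1)
    (hzero : (c : ZMod p) * 2 ^ a + 1 = 0) :
    p ∣ k * 2 ^ n + 1 := by
  have hcast : ((k * 2 ^ n + 1 : ℕ) : ZMod p) = 0 := by
    push_cast
    rw [pow_eq_pow_of_modEq' h2d hn, (ZMod.natCast_eq_natCast_iff k c p).mpr hk]
    exact hzero
  exact (ZMod.natCast_eq_zero_iff _ _).mp hcast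

/-- The covering argument: congruence conditions modulo the seven prime divisors of
`2^64 - 1`'s Fermat factors force `k · 2^n + 1` to be composite for all `n ≥ 1`. -/
lemma cover_lemma (k : ℕ) (hk4 : 4 ≤ k)
    (h3 : k ≡ 1 [MOD 3]) (h5 : k ≡ 1 [MOD 5]) (h17 : k ≡ 1 [MOD 17])
    (h257 : k ≡ 1 [MOD 257]) (h65537 : k ≡ 1 [MOD 65537])
    (hq : k ≡ 1 [MOD 6700417]) (h641 : k ≡ 640 [MOD 641]) :
    ∀ n : ℕ, 0 < n → IsComposite (k * 2 ^ n + 1) := by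
  intro n hn
  have hpow : ∀ m : ℕ, m ≤ n → 2 ^ m ≤ 2 ^ n := fun m hm =>
    Nat.pow_le_pow_right (by norm_num) hm
  by_cases c2 : n % 2 = 1
  · refine isComposite_of_dvd (p := 3) (by norm_num) ?_ ?_
    · have := hpow 1 (by omega); nlinarith
    · exact dvd_cover 3 k n 1 1 2 h3 (by show n % 2 = 1 % 2; omega) (by decide) (by decide)
  · by_cases c4 : n % 4 = 2
    · refine isComposite_of_dvd (p := 5) (by norm_num) ?_ ?_
      · have := hpow 2 (by omega); nlinarith
      · exact dvd_cover 5 k n 1 2 4 h5 (by show n % 4 = 2 % 4; omega) (by decide) (by decide)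
    · by_cases c8 : n % 8 = 4
      · refine isComposite_of_dvd (p := 17) (by norm_num) ?_ ?_
        · have := hpow 4 (by omega); nlinarith
        · exact dvd_cover 17 k n 1 4 8 h17 (by show n % 8 = 4 % 8; omega) (by decide)
            (by decide)
      · by_cases c16 : n % 16 = 8
        · refine isComposite_of_dvd (p := 257) (by norm_num) ?_ ?_
          · have := hpow 8 (by omega); nlinarith
          · exact dvd_cover 257 k n 1 8 16 h257 (by show n % 16 = 8 % 16; omega) (by decide)
              (by decide)
        · by_cases c32 : n % 32 = 16
          · refine isComposite_of_dvd (p := 65537) (by norm_num) ?_ ?_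
            · have := hpow 16 (by omega); nlinarith
            · exact dvd_cover 65537 k n 1 16 32 h65537 (by show n % 32 = 16 % 32; omega)
                (by decide) (by decide)
          · by_cases c64 : n % 64 = 32
            · refine isComposite_of_dvd (p := 6700417) (by norm_num) ?_ ?_
              · have := hpow 32 (by omega); nlinarith
              · exact dvd_cover 6700417 k n 1 32 64 hq (by show n % 64 = 32 % 64; omega)
                  (by decide) (by decide)
            · have c0 : n % 64 = 0 := by omega
              refine isComposite_of_dvd (p := 641) (by norm_num) ?_ ?_
              · have := hpow 64 (by omega); nlinarith
              · exact dvd_cover 641 k n 640 0 64 h641 (by show n % 64 = 0 % 64; omega)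
                  (by decide) (by decide)

/-- If `t ≡ 1 (mod p(p-1))` then the repunit sum is `≡ 1 (mod p)`, for any base. -/
lemma repS_modEq_one (p : ℕ) (hp : p.Prime) (b t : ℕ)
    (ht : t ≡ 1 [MOD p * (p - 1)]) : repS b t ≡ 1 [MOD p] := by
  haveI : Fact p.Prime := ⟨hp⟩
  have hp2 := hp.two_le
  have hm2 : 2 ≤ p * (p - 1) := by
    have h1 : 1 ≤ p - 1 := by omega
    calc 2 = 2 * 1 := by norm_num
    _ ≤ p * (p - 1) := Nat.mul_le_mul hp2 h1
  have ht1 : 1 ≤ t := by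
    have h1 : (1 : ℕ) % (p * (p - 1)) = 1 := Nat.one_mod_eq_one.mpr (by omega)
    have h2 : t % (p * (p - 1)) = 1 := by
      have := ht; unfold Nat.ModEq at this; omega
    have := Nat.mod_le t (p * (p - 1)); omega
  have htp : t ≡ 1 [MOD p] := ht.of_mul_right _
  have htp1 : t ≡ 1 [MOD p - 1] := ht.of_mul_left _
  rw [← ZMod.natCast_eq_natCast_iff]
  have hcast : ((repS b t : ℕ) : ZMod p) = ∑ i ∈ Finset.range t, (b : ZMod p) ^ i := by
    unfold repS; push_cast; rfl
  rw [hcast]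
  set x : ZMod p := (b : ZMod p) with hx
  have hxt : x ^ t = x := by
    obtain ⟨m, hm⟩ : ∃ m, t = 1 + (p - 1) * m := by
      obtain ⟨m, hm⟩ := (Nat.modEq_iff_dvd' ht1).mp htp1.symm
      exact ⟨m, by omega⟩
    by_cases hx0 : x = 0
    · rw [hx0, zero_pow (by omega)]
    · rw [hm, pow_add, pow_mul, pow_one, ZMod.pow_card_sub_one_eq_one hx0, one_pow, mul_one]
  by_cases hx1 : x = 1
  · rw [hx1]
    simp only [one_pow, Finset.sum_const, Finset.card_range, nsmul_eq_mul, mul_one]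
    exact_mod_cast (ZMod.natCast_eq_natCast_iff t 1 p).mpr htp
  · rw [geom_sum_eq hx1, hxt, div_self (sub_ne_zero.mpr hx1)]
    norm_num

/-- Mod 5 version: uses `b ≢ 1 (mod 5)` so only `t ≡ 1 (mod 4)` is needed. -/
lemma repS_modEq_one_five (b t : ℕ) (hb : ¬ b ≡ 1 [MOD 5]) (ht : t ≡ 1 [MOD 4]) :
    repS b t ≡ 1 [MOD 5] := by
  haveI : Fact (Nat.Prime 5) := ⟨by norm_num⟩
  have ht1 : 1 ≤ t := by
    have h2 : t % 4 = 1 := ht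
    omega
  rw [← ZMod.natCast_eq_natCast_iff]
  have hcast : ((repS b t : ℕ) : ZMod 5) = ∑ i ∈ Finset.range t, (b : ZMod 5) ^ i := by
    unfold repS; push_cast; rfl
  rw [hcast]
  set x : ZMod 5 := (b : ZMod 5) with hx
  have hx1 : x ≠ 1 := by
    intro h
    exact hb ((ZMod.natCast_eq_natCast_iff b 1 5).mp (by rw [hx] at h; simpa using h))
  have hxt : x ^ t = x := by
    obtain ⟨m, hm⟩ : ∃ m, t = 1 + 4 * m := by
      obtain ⟨m, hm⟩ := (Nat.modEq_iff_dvd' ht1).mp ht.symm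
      exact ⟨m, by omega⟩
    by_cases hx0 : x = 0
    · rw [hx0, zero_pow (by omega)]
    · rw [hm, pow_add, pow_mul, pow_one,
        show (4 : ℕ) = 5 - 1 from rfl, ZMod.pow_card_sub_one_eq_one hx0, one_pow, mul_one]
  rw [geom_sum_eq hx1, hxt, div_self (sub_ne_zero.mpr hx1)]
  norm_num

/-- Mod 641 version when `b ≡ 1 (mod 641)`. -/
lemma repS_modEq_641_one (b t : ℕ) (hb : b ≡ 1 [MOD 641]) (ht : t ≡ 640 [MOD 641]) :
    repS b t ≡ 640 [MOD 641] := by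
  rw [← ZMod.natCast_eq_natCast_iff]
  have hcast : ((repS b t : ℕ) : ZMod 641) = ∑ i ∈ Finset.range t, (b : ZMod 641) ^ i := by
    unfold repS; push_cast; rfl
  rw [hcast]
  have hx1 : (b : ZMod 641) = 1 := by
    have := (ZMod.natCast_eq_natCast_iff b 1 641).mpr hb
    simpa using this
  rw [hx1]
  simp only [one_pow, Finset.sum_const, Finset.card_range, nsmul_eq_mul, mul_one]
  exact_mod_cast (ZMod.natCast_eq_natCast_iff t 640 641).mpr ht

/-- Mod 641 version for a base `≢ 0, 1 (mod 641)` with `b^{t₀} ≡ 2 - b`. -/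
lemma repS_modEq_641_gen (b t t0 : ℕ) (ht : t ≡ t0 [MOD 640])
    (hx1 : (b : ZMod 641) ≠ 1) (hx0 : (b : ZMod 641) ≠ 0)
    (hpow : (b : ZMod 641) ^ t0 = 2 - (b : ZMod 641)) :
    repS b t ≡ 640 [MOD 641] := by
  have hneg : ((640 : ℕ) : ZMod 641) = -1 := by decide
  haveI : Fact (Nat.Prime 641) := ⟨by norm_num⟩
  rw [← ZMod.natCast_eq_natCast_iff]
  have hcast : ((repS b t : ℕ) : ZMod 641) = ∑ i ∈ Finset.range t, (b : ZMod 641) ^ i := by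
    unfold repS; push_cast; rfl
  rw [hcast]
  set x : ZMod 641 := (b : ZMod 641) with hxdef
  have h640 : x ^ 640 = 1 := by
    have := ZMod.pow_card_sub_one_eq_one hx0
    simpa using this
  have hxt : x ^ t = 2 - x := by
    rw [pow_eq_pow_of_modEq' h640 ht, hpow]
  rw [geom_sum_eq hx1, hxt]
  have h1 : (2 : ZMod 641) - x - 1 = -(x - 1) := by ring
  rw [h1, neg_div, div_self (sub_ne_zero.mpr hx1)]
  exact hneg.symm

/-- The master modulus `L` (lcm of `p(p-1)` over the six primes needing `repS ≡ 1`). -/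
lemma key_lemma (b t : ℕ) (hb : 2 < b) (hb5 : ¬ b ≡ 1 [MOD 5]) (ht2 : 2 ≤ t)
    (htL : t ≡ 1 [MOD 6581761817926884389486592])
    (h641 : repS b t ≡ 640 [MOD 641]) :
    IsSierpinski ((b ^ t - 1) / (b - 1)) := by
  rw [repunit_eq_repS b t (by omega)]
  have hsub : ({0, 1} : Finset ℕ) ⊆ Finset.range t := by
    intro x hx
    simp only [Finset.mem_insert, Finset.mem_singleton] at hx
    rcases hx with rfl | rfl <;> simp [Finset.mem_range] <;> omega
  have hge : b ^ 0 + b ^ 1 ≤ repS b t := by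
    have h := Finset.sum_le_sum_of_subset (f := fun i => b ^ i) hsub
    simpa [repS] using h
  have hk4 : 4 ≤ repS b t := by simp at hge; omega
  have hmod : ∀ d : ℕ, d ∣ 6581761817926884389486592 → t ≡ 1 [MOD d] :=
    fun d hd => htL.of_dvd hd
  have h2 : repS b t ≡ 1 [MOD 2] :=
    repS_modEq_one 2 (by norm_num) b t (hmod (2 * (2 - 1)) (by norm_num))
  refine ⟨by omega, ?_, ?_⟩
  · rw [Nat.odd_iff]
    have : repS b t % 2 = 1 % 2 := h2
    omega
  · exact cover_lemma (repS b t) hk4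
      (repS_modEq_one 3 (by norm_num) b t (hmod (3 * (3 - 1)) (by norm_num)))
      (repS_modEq_one_five b t hb5 (hmod 4 (by norm_num)))
      (repS_modEq_one 17 (by norm_num) b t (hmod (17 * (17 - 1)) (by norm_num)))
      (repS_modEq_one 257 (by norm_num) b t (hmod (257 * (257 - 1)) (by norm_num)))
      (repS_modEq_one 65537 (by norm_num) b t (hmod (65537 * (65537 - 1)) (by norm_num)))
      (repS_modEq_one 6700417 (by norm_num) b t
        (hmod (6700417 * (6700417 - 1)) (by norm_num)))
      h641

/-- Produce the infinite set from an arithmetic progression of suitable `t`. -/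
lemma infinite_aux (b r : ℕ) (hb : 2 < b) (hb5 : ¬ b ≡ 1 [MOD 5]) (hr2 : 2 ≤ r)
    (hrL : r ≡ 1 [MOD 6581761817926884389486592])
    (h641 : ∀ t : ℕ, t ≡ r [MOD 21094546626455664468304527360] → repS b t ≡ 640 [MOD 641]) :
    {t : ℕ | 0 < t ∧ IsSierpinski ((b ^ t - 1) / (b - 1))}.Infinite := by
  refine Set.infinite_of_injective_forall_mem
    (f := fun k : ℕ => r + 21094546626455664468304527360 * (k + 1)) ?_ ?_
  · intro a c h
    simp only at h
    omega
  · intro k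
    simp only [Set.mem_setOf_eq]
    have htr : r + 21094546626455664468304527360 * (k + 1)
        ≡ r [MOD 21094546626455664468304527360] := by
      show (r + 21094546626455664468304527360 * (k + 1)) % 21094546626455664468304527360
        = r % 21094546626455664468304527360
      exact Nat.add_mul_mod_self_left r 21094546626455664468304527360 (k + 1)
    have htL : r + 21094546626455664468304527360 * (k + 1)
        ≡ 1 [MOD 6581761817926884389486592] := by
      have h1 := htr.of_dvd (show (6581761817926884389486592:ℕ) ∣
        21094546626455664468304527360 by norm_num)
      exact h1.trans hrL
    have hge : r ≤ r + 21094546626455664468304527360 * (k + 1) := Nat.le_add_right r _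
    exact ⟨by omega, key_lemma b _ hb hb5 (by omega) htL (h641 _ htr)⟩

/-- Let `b > 2` be an integer with `b ≡ 𝔟 (mod 641)` for some
`𝔟 ∈ {1, 147, 265, 378}` and `b ≢ 1 (mod 5)`.  Then there exist infinitely many positive
integers `t` such that the `b`-repunit `(b^t − 1)/(b − 1)` is a Sierpiński number. -/
theorem stmt_13 (b : ℕ) (hb : 2 < b)
    (h641 : ∃ 𝔟 ∈ ({1, 147, 265, 378} : Finset ℕ), b ≡ 𝔟 [MOD 641])
    (h5 : ¬ b ≡ 1 [MOD 5]) :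
    {t : ℕ | 0 < t ∧ IsSierpinski ((b ^ t - 1) / (b - 1))}.Infinite := by
  obtain ⟨β, hβmem, hβ⟩ := h641
  simp only [Finset.mem_insert, Finset.mem_singleton] at hβmem
  have castβ : (b : ZMod 641) = (β : ZMod 641) :=
    (ZMod.natCast_eq_natCast_iff b β 641).mpr hβ
  rcases hβmem with rfl | rfl | rfl | rfl
  · -- β = 1, r = 2895975199887829131374100481
    apply infinite_aux b 2895975199887829131374100481 hb h5 (by norm_num)
      (by show _ % _ = _ % _; norm_num)
    intro t htr
    apply repS_modEq_641_one b t hβ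
    have h1 : t ≡ 2895975199887829131374100481 [MOD 641] := htr.of_dvd (by norm_num)
    exact h1.trans (by show _ % _ = _ % _; norm_num)
  · -- β = 147, r = 13163523635853768778973185, t0 = 385
    apply infinite_aux b 13163523635853768778973185 hb h5 (by norm_num)
      (by show _ % _ = _ % _; norm_num)
    intro t htr
    apply repS_modEq_641_gen b t 385
    · have h1 : t ≡ 13163523635853768778973185 [MOD 640] := htr.of_dvd (by norm_num)
      exact h1.trans (by show _ % _ = _ % _; norm_num)
    · rw [castβ]; decide
    · rw [castβ]; decide
    · rw [castβ]
      have h2 : ((147 : ℕ) : ZMod 641) ^ 385 = ((496 : ℕ) : ZMod 641) := by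
        rw [← Nat.cast_pow, ZMod.natCast_eq_natCast_iff]
        show _ % _ = _ % _
        norm_num
      rw [h2]; decide
  · -- β = 265, r = 6581761817926884389486593, t0 = 513
    apply infinite_aux b 6581761817926884389486593 hb h5 (by norm_num)
      (by show _ % _ = _ % _; norm_num)
    intro t htr
    apply repS_modEq_641_gen b t 513
    · have h1 : t ≡ 6581761817926884389486593 [MOD 640] := htr.of_dvd (by norm_num)
      exact h1.trans (by show _ % _ = _ % _; norm_num)
    · rw [castβ]; decide
    · rw [castβ]; decide
    · rw [castβ]
      have h2 : ((265 : ℕ) : ZMod 641) ^ 513 = ((378 : ℕ) : ZMod 641) := by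
        rw [← Nat.cast_pow, ZMod.natCast_eq_natCast_iff]
        show _ % _ = _ % _
        norm_num
      rw [h2]; decide
  · -- β = 378, r = 19745285453780653168459777, t0 = 257
    apply infinite_aux b 19745285453780653168459777 hb h5 (by norm_num)
      (by show _ % _ = _ % _; norm_num)
    intro t htr
    apply repS_modEq_641_gen b t 257
    · have h1 : t ≡ 19745285453780653168459777 [MOD 640] := htr.of_dvd (by norm_num)
      exact h1.trans (by show _ % _ = _ % _; norm_num)
    · rw [castβ]; decide
    · rw [castβ]; decide
    · rw [castβ]
      have h2 : ((378 : ℕ) : ZMod 641) ^ 257 = ((265 : ℕ) : ZMod 641) := by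
        rw [← Nat.cast_pow, ZMod.natCast_eq_natCast_iff]
        show _ % _ = _ % _
        norm_num
      rw [h2]; decide
end

section
/- For every positive integer t with t ≡ 131 (mod 2730) or t ≡ 1361 (mod 2730), the integer 659·(2^{12t} − 1)/(2^{12} − 1) (the 2-repstring consisting of the 10-bit binary string of 659 followed by two zeros, repeated t times) is a Sierpiński number. -/
/-!
The primes `3, 5, 7, 13, 17, 241` all divide `2^24 - 1`, and for a suitable residue `c` every
number `c·2^n + 1` is divisible by one of them, according to `n mod 24`; so every `k ≡ c`
modulo their product `M = 5592405 = 1365·4097` is Sierpiński. The repstring is `659·S` with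
`S = ∑_{i<t} 4096^i`. Since `4096 ≡ 1 (mod 1365)` we get `S ≡ t`, fixed by `t mod 2730`; since
`4096 ≡ -1 (mod 4097)` and `t` is odd we get `S ≡ 1`. This pins down `S mod M`.
-/

open Finset

theorem IsComposite.of_dvd {p N : ℕ} (hp : 1 < p) (hpN : p < N) (hdvd : p ∣ N) :
    IsComposite N := by
  obtain ⟨m, rfl⟩ := hdvd
  exact ⟨p, m, hp, by by_contra! h; interval_cases m <;> omega, rfl⟩

theorem exists_mem_dvd_mul_two_pow_add_one {P : List ℕ} {M L c k : ℕ} (hL : 0 < L)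
    (hML : 2 ^ L ≡ 1 [MOD M]) (hPM : ∀ p ∈ P, p ∣ M)
    (hcov : ∀ r < L, ∃ p ∈ P, p ∣ c * 2 ^ r + 1) (hk : k ≡ c [MOD M]) (n : ℕ) :
    ∃ p ∈ P, p ∣ k * 2 ^ n + 1 := by
  obtain ⟨p, hp, hdvd⟩ := hcov (n % L) (Nat.mod_lt n hL)
  have hperiod : k * 2 ^ n + 1 ≡ c * 2 ^ (n % L) + 1 [MOD M] := by
    have h2n : 2 ^ n = (2 ^ L) ^ (n / L) * 2 ^ (n % L) := by
      rw [← pow_mul, ← pow_add, Nat.div_add_mod]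
    have := (hML.pow (n / L)).mul_right (2 ^ (n % L))
    rw [one_pow, one_mul, ← h2n] at this
    exact (hk.mul this).add_right 1
  exact ⟨p, hp, (hperiod.dvd_iff (hPM p hp)).mpr hdvd⟩

theorem isSierpinski_of_covering {P : List ℕ} {M L c k : ℕ} (hk_odd : Odd k) (hL : 0 < L)
    (hML : 2 ^ L ≡ 1 [MOD M]) (hP : ∀ p ∈ P, p ∣ M ∧ 1 < p ∧ p ≤ 2 * k)
    (hcov : ∀ r < L, ∃ p ∈ P, p ∣ c * 2 ^ r + 1) (hk : k ≡ c [MOD M]) :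
    IsSierpinski k := by
  refine ⟨hk_odd.pos, hk_odd, fun n hn => ?_⟩
  obtain ⟨p, hp, hdvd⟩ :=
    exists_mem_dvd_mul_two_pow_add_one hL hML (fun p hp => (hP p hp).1) hcov hk n
  obtain ⟨-, hp1, hp2k⟩ := hP p hp
  have h2k : k * 2 ≤ k * 2 ^ n := Nat.mul_le_mul_left k (Nat.le_self_pow hn.ne' 2)
  exact .of_dvd hp1 (by omega) hdvd

section GeomSum

variable {m d n : ℕ}

theorem geomSum_natCast :
    ((∑ i ∈ range n, m ^ i : ℕ) : ZMod d) = ∑ i ∈ range n, (m : ZMod d) ^ i := by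
  push_cast; rfl

theorem geomSum_modEq_card (h : m ≡ 1 [MOD d]) : ∑ i ∈ range n, m ^ i ≡ n [MOD d] := by
  rw [← ZMod.natCast_eq_natCast_iff, geomSum_natCast, (ZMod.natCast_eq_natCast_iff _ 1 _).mpr h]
  simp

theorem geomSum_modEq_one_of_odd (h : d ∣ m + 1) (hn : Odd n) :
    ∑ i ∈ range n, m ^ i ≡ 1 [MOD d] := by
  have hm : (m : ZMod d) = -1 :=
    eq_neg_of_add_eq_zero_left (by exact_mod_cast (ZMod.natCast_eq_zero_iff _ _).mpr h)
  rw [← ZMod.natCast_eq_natCast_iff, geomSum_natCast, hm, neg_one_geom_sum,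
    if_neg (Nat.not_even_iff_odd.mpr hn), Nat.cast_one]

theorem odd_geomSum (hm : Even m) (hn : n ≠ 0) : Odd (∑ i ∈ range n, m ^ i) := by
  rw [Nat.odd_iff, ← ZMod.natCast_eq_natCast_iff' _ 1 2, geomSum_natCast,
    (ZMod.natCast_eq_zero_iff _ _).mpr (even_iff_two_dvd.mp hm), zero_geom_sum, if_neg hn]
  rfl

end GeomSum

def coveringPrimes : List ℕ := [3, 5, 7, 13, 17, 241]

-- `266306` and `2785961` are `≡ 131` resp. `≡ 1361 (mod 1365)` and `≡ 1 (mod 4097)`.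
theorem isSierpinski_659_mul {S : ℕ} (hS : Odd S)
    (h : S ≡ 266306 [MOD 5592405] ∨ S ≡ 2785961 [MOD 5592405]) :
    IsSierpinski (659 * S) := by
  have hS1 := hS.pos
  have hP : ∀ p ∈ coveringPrimes, p ∣ 5592405 ∧ 1 < p ∧ p ≤ 2 * (659 * S) := by
    intro p hp
    obtain ⟨hpM, hp1, hp⟩ :=
      (by decide : ∀ p ∈ coveringPrimes, p ∣ 5592405 ∧ 1 < p ∧ p ≤ 2 * 659) p hp
    exact ⟨hpM, hp1, by omega⟩
  have hodd : Odd (659 * S) := (by decide : Odd 659).mul hS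
  rcases h with h | h <;>
    exact isSierpinski_of_covering hodd (L := 24) (by norm_num) (by decide) hP (by decide)
      (h.mul_left 659)

theorem stmt_16_general (t : ℕ)
    (hmod : t ≡ 131 [MOD 2730] ∨ t ≡ 1361 [MOD 2730]) :
    IsSierpinski (659 * ((2 ^ (12 * t) - 1) / (2 ^ 12 - 1))) := by
  have hS : (2 ^ (12 * t) - 1) / (2 ^ 12 - 1) = ∑ i ∈ range t, 4096 ^ i := by
    rw [Nat.geomSum_eq (by norm_num)]; norm_num [pow_mul]
  rw [hS]
  set S := ∑ i ∈ range t, 4096 ^ i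
  have ht_odd : Odd t := by
    rw [Nat.odd_iff]; rcases hmod with h | h <;> (unfold Nat.ModEq at h; omega)
  have hS_1365 : S ≡ t [MOD 1365] := geomSum_modEq_card (by decide)
  have hS_4097 : S ≡ 1 [MOD 4097] := geomSum_modEq_one_of_odd (by norm_num) ht_odd
  have hcrt : ∀ s, S ≡ s [MOD 1365] → S ≡ s [MOD 4097] → S ≡ s [MOD 5592405] :=
    fun s h₁ h₂ =>
      (Nat.modEq_and_modEq_iff_modEq_mul (by norm_num : Nat.Coprime 1365 4097)).mp ⟨h₁, h₂⟩
  refine isSierpinski_659_mul (odd_geomSum (by decide) ht_odd.pos.ne') ?_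
  rcases hmod with h | h <;> [apply Or.inl; apply Or.inr] <;>
    exact hcrt _ (hS_1365.trans ((h.of_dvd (by norm_num)).trans (by decide))) hS_4097

/-- For every positive integer `t` with `t ≡ 131 (mod 2730)` or
`t ≡ 1361 (mod 2730)`, the integer `659·(2^{12t} − 1)/(2^{12} − 1)` (the 2-repstring
consisting of the 10-bit binary string of 659 followed by two zeros, repeated `t` times)
is a Sierpiński number. -/
theorem stmt_16 (t : ℕ) (ht : 0 < t)
    (hmod : t ≡ 131 [MOD 2730] ∨ t ≡ 1361 [MOD 2730]) :
    IsSierpinski (659 * ((2 ^ (12 * t) - 1) / (2 ^ 12 - 1))) :=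
  stmt_16_general t hmod
end
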